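/- Let G be an outer k-planar graph with an outer k-planar drawing D = (v_1,…,v_n), and suppose that in D no edge pierces the vertex pair {v_1, v_i}. Then there are at most 2k+2 internally vertex-disjoint non-trivial paths (paths with at least two edges) between v_1 and v_i in G. -/

import Mathlib

/-!
Let `x_i` be the second vertex of the `i`-th path, and split the paths by the side of `v` on
which `x_i` lies. On one side, let `x_0` be the neighbour of `u` closest to `v`. Every other
path on that side continues from `x_i` to `v` past `x_0`, so it uses an edge jumping over `x_0`.
Since `u` comes first, that edge crosses `u x_0`. The paths meet only at `u` and `v`, so these
edges are distinct. This gives at most `k + 1` paths on each side.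
-/

open Function SimpleGraph

/-- Position of the lower endpoint of an edge in a circular drawing given by
vertex positions `π`. -/
def elo {V : Type*} (π : V → ℕ) : Sym2 V → ℕ :=
  Sym2.lift ⟨fun a b => min (π a) (π b), fun a b => min_comm (π a) (π b)⟩

/-- Position of the upper endpoint of an edge in a circular drawing. -/
def ehi {V : Type*} (π : V → ℕ) : Sym2 V → ℕ :=
  Sym2.lift ⟨fun a b => max (π a) (π b), fun a b => max_comm (π a) (π b)⟩

/-- Two edges (or vertex pairs) cross (equivalently, the first pierces the
second) in the circular drawing given by positions `π`:
`i < i' < j < j'` or `i' < i < j' < j`. -/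
def ecross {V : Type*} (π : V → ℕ) (e f : Sym2 V) : Prop :=
  (elo π e < elo π f ∧ elo π f < ehi π e ∧ ehi π e < ehi π f) ∨
  (elo π f < elo π e ∧ elo π e < ehi π f ∧ ehi π f < ehi π e)

/-- The number of edges of `G` crossing `e` in the circular drawing `π`. -/
noncomputable def crossNum {V : Type*} (G : SimpleGraph V) (π : V → ℕ)
    (e : Sym2 V) : ℕ :=
  {f | f ∈ G.edgeSet ∧ ecross π e f}.ncard

/-- `π` is an outer `k`-planar drawing of `G`: an injective assignment of
positions (a circular order) such that every edge crosses at most `k` edges. -/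
def IsOuterKPlanar {V : Type*} (G : SimpleGraph V) (k : ℕ) (π : V → ℕ) : Prop :=
  Injective π ∧ ∀ e ∈ G.edgeSet, crossNum G π e ≤ k

@[simp] lemma elo_mk {V : Type*} (π : V → ℕ) (x y : V) :
    elo π s(x, y) = min (π x) (π y) := rfl

@[simp] lemma ehi_mk {V : Type*} (π : V → ℕ) (x y : V) :
    ehi π s(x, y) = max (π x) (π y) := rfl

namespace SimpleGraph.Walk

variable {V : Type*} {G : SimpleGraph V}

lemma exists_mem_edges_elo_lt_lt_ehi (π : V → ℕ) {c : ℕ} {a b : V} (p : G.Walk a b)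
    (hp : ∀ z ∈ p.support, π z ≠ c) (hab : π a < c ∧ c < π b ∨ π b < c ∧ c < π a) :
    ∃ f ∈ p.edges, elo π f < c ∧ c < ehi π f := by
  induction p with
  | nil => omega
  | @cons x y _ h p ih =>
    by_cases hxy : π x < c ∧ c < π y ∨ π y < c ∧ c < π x
    · exact ⟨s(x, y), by simp, by simp only [elo_mk, ehi_mk]; omega⟩
    · have hy : π y ≠ c := hp y (by simp)
      obtain ⟨f, hf, hfc⟩ := ih (fun z hz => hp z (by simp [hz])) (by omega)
      exact ⟨f, by simp [hf], hfc⟩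

lemma lt_elo_of_mem_edges {π : V → ℕ} (hπ : Injective π) {u : V} (hfirst : ∀ z, π u ≤ π z)
    {a b : V} {p : G.Walk a b} (hu : u ∉ p.support) {f : Sym2 V} (hf : f ∈ p.edges) :
    π u < elo π f := by
  induction f using Sym2.ind with
  | _ c d =>
    have hne : ∀ z ∈ p.support, π u < π z := fun z hz =>
      (hfirst z).lt_of_ne fun h => hu (hπ h ▸ hz)
    exact lt_min (hne c (p.fst_mem_support_of_mem_edges hf))
      (hne d (p.snd_mem_support_of_mem_edges hf))

lemma notMem_edges_of_support_inter_eq {a b c d v : V} {p : G.Walk a b} {q : G.Walk c d}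
    (h : ∀ z ∈ p.support, z ∈ q.support → z = v) {f : Sym2 V} (hp : f ∈ p.edges) :
    f ∉ q.edges := by
  induction f using Sym2.ind with
  | _ x y =>
    intro hq
    have hx := h x (p.fst_mem_support_of_mem_edges hp) (q.fst_mem_support_of_mem_edges hq)
    have hy := h y (p.snd_mem_support_of_mem_edges hp) (q.snd_mem_support_of_mem_edges hq)
    exact (p.edges_subset_edgeSet hp).ne (hx.trans hy.symm)

lemma IsPath.start_notMem_support_tail {u v : V} {p : G.Walk u v} (hp : p.IsPath)
    (hnil : ¬ p.Nil) : u ∉ p.tail.support := by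
  have := hp.support_nodup
  rw [← cons_support_tail hnil] at this
  exact (List.nodup_cons.mp this).1

lemma IsPath.snd_ne_end {u v : V} {p : G.Walk u v} (hp : p.IsPath) (hlen : 2 ≤ p.length) :
    p.snd ≠ v := by
  rw [Ne, hp.getVert_eq_end_iff (by omega)]
  omega

end SimpleGraph.Walk

section Fan

variable {V ι : Type*} {G : SimpleGraph V} {π : V → ℕ} {u v : V} {a : ι → V}
  (q : ∀ j, G.Walk (a j) v)

theorem card_le_crossNum [Finite V] (hπ : Injective π) (hfirst : ∀ z, π u ≤ π z)
    (hu : ∀ j, u ∉ (q j).support)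
    (hdisj : Pairwise fun i j => ∀ z ∈ (q i).support, z ∈ (q j).support → z = v)
    {x : V} (T : Finset ι) (hx : ∀ j ∈ T, x ∉ (q j).support)
    (hside : ∀ j ∈ T, π (a j) < π x ∧ π x < π v ∨ π v < π x ∧ π x < π (a j)) :
    T.card ≤ crossNum G π s(u, x) := by
  have hjump : ∀ j ∈ T, ∃ f ∈ (q j).edges, elo π f < π x ∧ π x < ehi π f := fun j hj =>
    (q j).exists_mem_edges_elo_lt_lt_ehi π (fun z hz h => hx j hj (hπ h ▸ hz)) (hside j hj)
  have : Nonempty (Sym2 V) := ⟨s(u, u)⟩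
  choose! g hgq hg using hjump
  rw [← Set.ncard_coe_finset]
  refine Set.ncard_le_ncard_of_injOn g (fun j hj => ⟨(q j).edges_subset_edgeSet (hgq j hj), ?_⟩)
    (fun i hi j hj hij => ?_) (Set.toFinite _)
  · left
    simp only [elo_mk, ehi_mk, min_eq_left (hfirst x), max_eq_right (hfirst x)]
    exact ⟨Walk.lt_elo_of_mem_edges hπ hfirst (hu j) (hgq j hj), hg j hj⟩
  · by_contra hne
    exact Walk.notMem_edges_of_support_inter_eq (hdisj hne) (hgq i hi) (hij ▸ hgq j hj)

theorem card_le_succ_of_same_side [Finite V] [DecidableEq ι] {k : ℕ} (hD : IsOuterKPlanar G k π)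
    (hfirst : ∀ z, π u ≤ π z) (hadj : ∀ j, G.Adj u (a j)) (hav : ∀ j, a j ≠ v)
    (hu : ∀ j, u ∉ (q j).support)
    (hdisj : Pairwise fun i j => ∀ z ∈ (q i).support, z ∈ (q j).support → z = v)
    (T : Finset ι) (hT : ∀ i ∈ T, ∀ j ∈ T, (π (a i) < π v ↔ π (a j) < π v)) :
    T.card ≤ k + 1 := by
  obtain rfl | hne := T.eq_empty_or_nonempty
  · simp
  obtain ⟨j₀, hj₀, hclosest⟩ := T.exists_min_image
    (fun j => max (π (a j)) (π v) - min (π (a j)) (π v)) hne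
  have hoff : ∀ j ∈ T, j ≠ j₀ → a j₀ ∉ (q j).support := fun j _ hj h =>
    hav j₀ (hdisj (Ne.symm hj) _ (q j₀).start_mem_support h)
  have hside : ∀ j ∈ T.erase j₀,
      π (a j) < π (a j₀) ∧ π (a j₀) < π v ∨ π v < π (a j₀) ∧ π (a j₀) < π (a j) := by
    intro j hj
    obtain ⟨hjj₀, hjT⟩ := Finset.mem_erase.mp hj
    have h₁ : π (a j) ≠ π (a j₀) := fun h => hoff j hjT hjj₀ (hD.1 h ▸ (q j).start_mem_support)
    have h₂ : π (a j₀) ≠ π v := fun h => hav j₀ (hD.1 h)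
    have hcloser := hclosest j hjT
    have hsame := hT j hjT j₀ hj₀
    omega
  calc T.card = (T.erase j₀).card + 1 := (Finset.card_erase_add_one hj₀).symm
    _ ≤ crossNum G π s(u, a j₀) + 1 := by
      gcongr
      exact card_le_crossNum q hD.1 hfirst hu hdisj (T.erase j₀)
        (fun j hj => hoff j (Finset.mem_of_mem_erase hj) (Finset.ne_of_mem_erase hj)) hside
    _ ≤ k + 1 := by gcongr; exact hD.2 s(u, a j₀) (hadj j₀)

end Fan

theorem stmt14_general {V : Type*} [Fintype V] (G : SimpleGraph V) (k : ℕ)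
    (π : V → ℕ) (hD : IsOuterKPlanar G k π)
    (u v : V) (huv : u ≠ v)
    (hfirst : ∀ z : V, π u ≤ π z)
    (m : ℕ) (P : Fin m → G.Walk u v)
    (hpath : ∀ i, (P i).IsPath) (hlen : ∀ i, 2 ≤ (P i).length)
    (hdisj : ∀ i j, i ≠ j → ∀ x, x ∈ (P i).support → x ∈ (P j).support →
      x = u ∨ x = v) :
    m ≤ 2 * k + 2 := by
  classical
  have hnil : ∀ i, ¬ (P i).Nil := fun i => Walk.not_nil_of_ne huv
  have hu : ∀ i, u ∉ (P i).tail.support := fun i =>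
    (hpath i).start_notMem_support_tail (hnil i)
  have hsub : ∀ i, ∀ z ∈ (P i).tail.support, z ∈ (P i).support := fun i z hz =>
    Walk.cons_support_tail (hnil i) ▸ List.mem_cons_of_mem u hz
  have hdisj' : Pairwise fun i j => ∀ z ∈ (P i).tail.support, z ∈ (P j).tail.support → z = v :=
    fun i j hij z hi hj =>
      (hdisj i j hij z (hsub i z hi) (hsub j z hj)).resolve_left fun h => hu i (h ▸ hi)
  have hside := card_le_succ_of_same_side (fun i => (P i).tail) hD hfirst
    (fun i => Walk.adj_snd (hnil i)) (fun i => (hpath i).snd_ne_end (hlen i)) hu hdisj'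
  have hlt := hside (Finset.univ.filter fun i => π (P i).snd < π v)
    fun i hi j hj => iff_of_true (Finset.mem_filter.mp hi).2 (Finset.mem_filter.mp hj).2
  have hge := hside (Finset.univ.filter fun i => ¬ π (P i).snd < π v)
    fun i hi j hj => iff_of_false (Finset.mem_filter.mp hi).2 (Finset.mem_filter.mp hj).2
  have := Finset.card_filter_add_card_filter_not (s := Finset.univ)
    (fun i : Fin m => π (P i).snd < π v)
  simp only [Finset.card_univ, Fintype.card_fin] at this
  omega

/-- If in an outer `k`-planar drawing no edge pierces the pair `{v_1, v_i}`
(where `v_1` is the first vertex of the drawing), then there are at most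
`2k+2` pairwise internally vertex-disjoint non-trivial paths (paths with at
least two edges) between `v_1` and `v_i`. -/
theorem stmt14 {V : Type*} [Fintype V] (G : SimpleGraph V) (k : ℕ)
    (π : V → ℕ) (hD : IsOuterKPlanar G k π)
    (u v : V) (huv : u ≠ v)
    (hfirst : ∀ z : V, π u ≤ π z)
    (hnopierce : ∀ f ∈ G.edgeSet, ¬ ecross π f s(u, v))
    (m : ℕ) (P : Fin m → G.Walk u v)
    (hpath : ∀ i, (P i).IsPath) (hlen : ∀ i, 2 ≤ (P i).length)
    (hinj : Function.Injective P)
    (hdisj : ∀ i j, i ≠ j → ∀ x, x ∈ (P i).support → x ∈ (P j).support →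
      x = u ∨ x = v) :
    m ≤ 2 * k + 2 :=
  stmt14_general G k π hD u v huv hfirst m P hpath hlen hdisj
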